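/- arXiv:2501.11192 — 5 statements merged into one kernel-verified Lean document; each statement's English description precedes it below -/
import Mathlib

section
/- For every t ≥ 1, the complement of an induced matching on t edges (i.e., the complement of the disjoint union of t copies of K_2) has thinness exactly t. -/
/-- A graph `G` is `k`-thin: there is an ordering of the vertices (given by an
injection into `ℕ`) and a partition into `k` classes such that for every triple
`r < s < t` with `r, s` in the same class and `rt` an edge, also `st` is an edge. -/
def IsKThin {W : Type*} (G : SimpleGraph W) (k : ℕ) : Prop :=
  ∃ f : W → ℕ, Function.Injective f ∧
    ∃ c : W → Fin k, ∀ r s t : W, f r < f s → f s < f t → c r = c s →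
      G.Adj r t → G.Adj s t

/-- The complement of an induced matching on `t` edges: vertices `0,…,2t-1`,
with `u` and `v` adjacent iff they are not in the same matched pair `{2i, 2i+1}`. -/
def coMatching (t : ℕ) : SimpleGraph (Fin (2 * t)) :=
  SimpleGraph.fromRel (fun u v => u.val / 2 ≠ v.val / 2)

lemma coMatching_adj {t : ℕ} {u v : Fin (2 * t)} :
    (coMatching t).Adj u v ↔ u ≠ v ∧ u.val / 2 ≠ v.val / 2 := by
  simp only [coMatching, SimpleGraph.fromRel_adj]
  constructor
  · rintro ⟨h, h2 | h2⟩ <;> exact ⟨h, by omega⟩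
  · rintro ⟨h, h2⟩; exact ⟨h, Or.inl h2⟩

/-- For every `t ≥ 1`, the complement of an induced matching on `t` edges has
thinness exactly `t`: `t` is the least `k` such that the graph is `k`-thin. -/
theorem thinness_coMatching (t : ℕ) (ht : 1 ≤ t) :
    IsLeast {k : ℕ | IsKThin (coMatching t) k} t := by
  constructor
  · -- t-thin
    refine ⟨Fin.val, Fin.val_injective, fun v => ⟨v.val / 2, by omega⟩, ?_⟩
    intro r s u hrs hsu hc hadj
    rw [coMatching_adj] at hadj ⊢
    have hc' : r.val / 2 = s.val / 2 := congrArg Fin.val hc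
    exact ⟨fun h => by omega, by omega⟩
  · -- lower bound
    rintro k ⟨f, hf, c, H⟩
    -- for each pair, the vertex with smaller f-value
    set v0 : Fin t → Fin (2 * t) := fun i => ⟨2 * i, by omega⟩ with hv0
    set v1 : Fin t → Fin (2 * t) := fun i => ⟨2 * i + 1, by omega⟩ with hv1
    have hne : ∀ i, f (v0 i) ≠ f (v1 i) := fun i h => by
      have := hf h
      simp only [hv0, hv1, Fin.mk.injEq] at this
      omega
    set a : Fin t → Fin (2 * t) := fun i => if f (v0 i) < f (v1 i) then v0 i else v1 i
    set b : Fin t → Fin (2 * t) := fun i => if f (v0 i) < f (v1 i) then v1 i else v0 i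
    have hdiv : ∀ i, (a i).val / 2 = i ∧ (b i).val / 2 = i := by
      intro i
      simp only [a, b, hv0, hv1]
      split <;> constructor <;> simp <;> omega
    have hab : ∀ i, f (a i) < f (b i) := by
      intro i
      simp only [a, b]
      split
      · assumption
      · exact lt_of_le_of_ne (not_lt.mp ‹_›) (Ne.symm (hne i))
    have key : Function.Injective (fun i => c (a i)) := by
      intro i j hc
      by_contra hij
      simp only at hc
      -- wlog f (a i) < f (a j)
      rcases lt_or_gt_of_ne (fun h : f (a i) = f (a j) => by
        have := hf h
        have hi := hdiv i; have hj := hdiv j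
        apply hij; apply Fin.ext
        have : (a i).val = (a j).val := congrArg Fin.val this
        omega) with hlt | hlt
      · have := H (a i) (a j) (b j) hlt (hab j) hc ?_
        · rw [coMatching_adj] at this
          have hi := hdiv i; have hj := hdiv j
          exact this.2 (by omega)
        · rw [coMatching_adj]
          have hi := hdiv i; have hj := hdiv j
          have : i.val ≠ j.val := fun h => hij (Fin.ext h)
          constructor
          · intro h; have := congrArg Fin.val h; omega
          · omega
      · have := H (a j) (a i) (b i) hlt (hab i) hc.symm ?_
        · rw [coMatching_adj] at this
          have hi := hdiv i; have hj := hdiv j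
          exact this.2 (by omega)
        · rw [coMatching_adj]
          have hi := hdiv i; have hj := hdiv j
          have : i.val ≠ j.val := fun h => hij (Fin.ext h)
          constructor
          · intro h; have := congrArg Fin.val h; omega
          · omega
    simpa using Fintype.card_le_of_injective _ key
end

section
/- Let G be an H-graph for a tree H with exactly ℓ ≥ 2 leaves. Then the thinness of G is at most ℓ - 1. If ℓ ≤ 1 (H is a single vertex), then G is a complete graph and has thinness 1. -/
/-- One step of subdividing an edge `uv`: replace `uv` by a new vertex `w`
(not a vertex of the current graph) and edges `uw`, `wv`. -/
def SubdivideEdge {α : Type*} (H H' : SimpleGraph α) : Prop :=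
  ∃ u v w : α, H.Adj u v ∧ w ∉ H.support ∧
    H' = SimpleGraph.fromEdgeSet ((H.edgeSet \ {s(u, v)}) ∪ {s(u, w), s(w, v)})

/-- `H'` is a subdivision of `H`: obtained by a (possibly empty) sequence of edge
subdivisions. -/
def IsSubdivisionOf {α : Type*} (H H' : SimpleGraph α) : Prop :=
  Relation.ReflTransGen SubdivideEdge H H'

/-- A vertex subset is connected if it induces a connected subgraph
(the empty set counts as connected). -/
def ConnSub {β : Type*} (G : SimpleGraph β) (S : Set β) : Prop :=
  S.Nonempty → (G.induce S).Connected

/-!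
Root the tree at a leaf `ρ` and work with the path metric: in a tree, `Between r y x`, i.e.
`d(r, y) + d(y, x) = d(r, x)`, says that `y` lies on the path from `r` to `x`. Every subtree
`S w` has a top `top w`, its point closest to `ρ`, and every path from `ρ` into `S w` passes
through it. Order the vertices of `G` by decreasing depth of their tops and colour `w` by a leaf
`L ≠ ρ` whose root path passes through `top w`; this uses `ℓ - 1` colours. If `r < s < t` share
a colour and `S r` meets `S t` in `x`, then `top s` lies on the root path to `top r`, hence to
`x`, and below `top t`, so `top s ∈ S t`.

A subdivision step must add a vertex outside the support of the graph, while a tree on `α` with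
an edge has support all of `α`; so here `H' = H`.
-/

namespace SimpleGraph

variable {V : Type*} {G : SimpleGraph V} {r x y z : V}

def Between (G : SimpleGraph V) (u y v : V) : Prop :=
  G.dist u y + G.dist y v = G.dist u v

lemma between_self_right (u v : V) : G.Between u v v := by
  simp [Between]

lemma Between.dist_le (h : G.Between r y x) : G.dist r y ≤ G.dist r x := by
  unfold Between at h; omega

lemma between_of_adj (hadj : G.Adj y x) (hd : G.dist r y + 1 = G.dist r x) :
    G.Between r y x := by
  rwa [Between, dist_eq_one_iff_adj.2 hadj]

namespace Connected

variable (hG : G.Connected)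
include hG

lemma between_trans (h₁ : G.Between r y z) (h₂ : G.Between r z x) : G.Between r y x := by
  have := hG.dist_triangle (u := r) (v := y) (w := x)
  have := hG.dist_triangle (u := y) (v := z) (w := x)
  unfold Between at *; omega

lemma eq_of_between_of_dist_eq (h : G.Between r y x) (hd : G.dist r y = G.dist r x) : y = x :=
  hG.dist_eq_zero_iff.1 (by unfold Between at h; omega)

lemma exists_adj_between (h : G.Between r y x) (hne : y ≠ x) :
    ∃ a, G.Adj a x ∧ G.dist r a + 1 = G.dist r x ∧ G.Between r y a := by
  obtain ⟨p, hp⟩ := hG.exists_walk_length_eq_dist x y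
  have hnil : ¬ p.Nil := fun hnil => hne (hnil.eq.symm)
  have hxa : G.Adj x p.snd := p.adj_snd hnil
  have hay : G.dist p.snd y + 1 ≤ G.dist x y := by
    rw [← hp, ← p.length_tail_add_one hnil]; exact Nat.add_le_add_right (dist_le _) 1
  have h₁ := hG.dist_triangle (u := r) (v := y) (w := p.snd)
  have h₂ := hG.dist_triangle (u := r) (v := p.snd) (w := x)
  have h₃ := hG.dist_triangle (u := r) (v := p.snd) (w := y)
  rw [dist_eq_one_iff_adj.2 hxa.symm] at h₂
  have h₄ : G.dist y x = G.dist x y := dist_comm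
  have h₅ : G.dist y p.snd = G.dist p.snd y := dist_comm
  refine ⟨p.snd, hxa.symm, ?_, ?_⟩ <;> unfold Between at * <;> omega

end Connected

lemma exists_walk_support_subset_of_preconnected_induce {S : Set V}
    (hS : (G.induce S).Preconnected) {u v : V} (hu : u ∈ S) (hv : v ∈ S) :
    ∃ q : G.Walk u v, ∀ w ∈ q.support, w ∈ S := by
  obtain ⟨q⟩ := hS ⟨u, hu⟩ ⟨v, hv⟩
  have hq : ∀ w ∈ (q.map (Embedding.induce S).toHom).support, w ∈ S := by
    intro w hw
    obtain ⟨⟨w, hwS⟩, -, rfl⟩ := List.mem_map.1 (by rwa [Walk.support_map] at hw)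
    exact hwS
  exact ⟨_, hq⟩

namespace IsTree

variable (hG : G.IsTree)
include hG

lemma eq_of_adj_of_dist_add_one {a b : V} (ha : G.Adj a x) (hb : G.Adj b x)
    (hda : G.dist r a + 1 = G.dist r x) (hdb : G.dist r b + 1 = G.dist r x) : a = b := by
  obtain ⟨q, hq, -⟩ := hG.connected.exists_path_of_dist r x
  suffices ∀ a, G.Adj a x → G.dist r a + 1 = G.dist r x → a = q.penultimate from
    (this a ha hda).trans (this b hb hdb).symm
  intro a ha hda
  classical
  obtain ⟨p, hp, hpl⟩ := hG.connected.exists_path_of_dist r a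
  have hx : x ∉ p.support := fun hx =>
    absurd ((dist_le _).trans (p.length_takeUntil_le_length hx)) (by omega)
  exact hG.isAcyclic.eq_penultimate_of_adj_end hq ha.symm
    (hG.isAcyclic.mem_support_of_ne_mem_support_of_adj_of_isPath hq hp ha.symm hx)

lemma between_of_between_of_dist_le (hy : G.Between r y x) (hz : G.Between r z x)
    (hd : G.dist r y ≤ G.dist r z) : G.Between r y z := by
  induction hn : G.dist r x using Nat.strong_induction_on generalizing x with
  | _ n ih =>
  by_cases hzx : z = x
  · exact hzx ▸ hy
  have hyx : y ≠ x := by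
    rintro rfl
    exact hzx (hG.connected.eq_of_between_of_dist_eq hz (le_antisymm hz.dist_le hd))
  obtain ⟨a, ha, hda, hya⟩ := hG.connected.exists_adj_between hy hyx
  obtain ⟨b, hb, hdb, hzb⟩ := hG.connected.exists_adj_between hz hzx
  obtain rfl := hG.eq_of_adj_of_dist_add_one ha hb hda hdb
  exact ih _ (by omega) hya hzb rfl

lemma between_of_forall_dist_le {S : Set V} (hS : (G.induce S).Preconnected) {p : V}
    (hp : p ∈ S) (hmin : ∀ y ∈ S, G.dist r p ≤ G.dist r y) (hx : x ∈ S) :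
    G.Between r p x := by
  obtain ⟨q, hq⟩ := exists_walk_support_subset_of_preconnected_induce hS hx hp
  induction q with
  | nil => exact between_self_right _ _
  | @cons x x' p hxx' q ih =>
    have hpx' := ih hp hmin (hq x' (List.mem_cons_of_mem _ q.start_mem_support))
      (fun w hw => hq w (List.mem_cons_of_mem _ hw))
    rcases hG.dist_eq_dist_add_one_of_adj r hxx' with h | h
    · exact hG.connected.between_trans hpx' (between_of_adj hxx'.symm h.symm)
    · exact hG.between_of_between_of_dist_le hpx' (between_of_adj hxx' h.symm) (hmin x hx)

lemma mem_of_between {S : Set V} (hS : (G.induce S).Preconnected) {p : V} (hp : p ∈ S)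
    (hx : x ∈ S) (hpy : G.Between r p y) (hyx : G.Between r y x) : y ∈ S := by
  obtain ⟨q, hq⟩ := exists_walk_support_subset_of_preconnected_induce hS hx hp
  induction q with
  | nil =>
    obtain rfl := hG.connected.eq_of_between_of_dist_eq hyx (le_antisymm hyx.dist_le hpy.dist_le)
    exact hx
  | @cons x x' p hxx' q ih =>
    have ih := fun hyx' => ih hp (hq x' (List.mem_cons_of_mem _ q.start_mem_support)) hpy hyx'
      (fun w hw => hq w (List.mem_cons_of_mem _ hw))
    rcases hG.dist_eq_dist_add_one_of_adj r hxx' with h | h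
    · by_cases hd : G.dist r y ≤ G.dist r x'
      · exact ih (hG.between_of_between_of_dist_le hyx (between_of_adj hxx'.symm h.symm) hd)
      · obtain rfl := hG.connected.eq_of_between_of_dist_eq hyx (by have := hyx.dist_le; omega)
        exact hx
    · exact ih (hG.connected.between_trans hyx (between_of_adj hxx' h.symm))

lemma exists_leaf_between [Fintype V] [DecidableRel G.Adj] (hr : G.degree r = 1) (v : V) :
    ∃ L, G.degree L = 1 ∧ L ≠ r ∧ G.Between r v L := by
  obtain ⟨L, hvL, hmax⟩ := Set.exists_max_image {y | G.Between r v y} (G.dist r)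
    (Set.toFinite _) ⟨v, between_self_right _ _⟩
  have hparent : ∀ c, G.Adj L c → G.dist r c + 1 = G.dist r L := fun c hc =>
    ((hG.dist_eq_dist_add_one_of_adj r hc).resolve_right fun h => by
      have := hmax c (hG.connected.between_trans hvL (between_of_adj hc h.symm))
      omega).symm
  have hLr : L ≠ r := by
    rintro rfl
    obtain ⟨c, hc⟩ := (G.degree_pos_iff_exists_adj _).1 (hr ▸ one_pos)
    simpa using hparent c hc
  obtain ⟨c, hc⟩ : ∃ c, G.Adj L c := by
    obtain ⟨p⟩ := hG.connected L r
    exact ⟨_, p.adj_snd fun hnil => hLr hnil.eq⟩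
  refine ⟨L, degree_eq_one_iff_existsUnique_adj.2 ⟨c, hc, fun c' hc' => ?_⟩, hLr, hvL⟩
  exact hG.eq_of_adj_of_dist_add_one hc'.symm hc.symm (hparent c' hc') (hparent c hc)

end IsTree

end SimpleGraph

lemma isKThin_of_rank {W : Type*} [Fintype W] {G : SimpleGraph W} {k : ℕ} (rank : W → ℕ)
    (c : W → Fin k)
    (h : ∀ r s t, rank t ≤ rank s → rank s ≤ rank r → s ≠ t → c r = c s → G.Adj r t →
      G.Adj s t) :
    IsKThin G k := by
  set n := Fintype.card W
  set N := Finset.univ.sup rank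
  have hN : ∀ w, rank w ≤ N := fun w => Finset.le_sup (Finset.mem_univ w)
  let e := Fintype.equivFin W
  -- `f` lists `W` by decreasing rank, ties broken by `e`.
  let f : W → ℕ := fun w => e w + n * (N - rank w)
  have hpos : ∀ w : W, 0 < n := fun w => Fintype.card_pos_iff.2 ⟨w⟩
  have hdiv : ∀ w, f w / n = N - rank w := fun w => by
    rw [Nat.add_mul_div_left _ _ (hpos w), Nat.div_eq_of_lt (e w).2, zero_add]
  have hmod : ∀ w, f w % n = e w := fun w => by
    rw [Nat.add_mul_mod_self_left, Nat.mod_eq_of_lt (e w).2]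
  have hrank : ∀ a b, f a < f b → rank b ≤ rank a := fun a b hab => by
    have := Nat.div_le_div_right (c := n) hab.le
    rw [hdiv, hdiv] at this
    have := hN b; omega
  refine ⟨f, fun a b hab => e.injective (Fin.ext ?_), c, fun r s t hrs hst hc hrt => ?_⟩
  · rw [← hmod a, ← hmod b, hab]
  · exact h r s t (hrank s t hst) (hrank r s hrs) (fun hst' => by subst hst'; omega) hc hrt

lemma SimpleGraph.Connected.not_subdivideEdge {α : Type*} {H : SimpleGraph α} (hH : H.Connected)
    (H' : SimpleGraph α) : ¬ SubdivideEdge H H' := by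
  rintro ⟨u, v, w, huv, hw, -⟩
  obtain ⟨p⟩ := hH.preconnected w u
  cases p with
  | nil => exact hw (H.mem_support.2 ⟨v, huv⟩)
  | cons h _ => exact hw (H.mem_support.2 ⟨_, h⟩)

lemma IsSubdivisionOf.eq_of_connected {α : Type*} {H H' : SimpleGraph α} (hH : H.Connected)
    (hsub : IsSubdivisionOf H H') : H' = H := by
  rcases Relation.ReflTransGen.cases_head hsub with h | ⟨H'', h, -⟩
  · exact h.symm
  · exact absurd h (hH.not_subdivideEdge H'')

theorem SimpleGraph.IsTree.isKThin_of_subtrees {α W : Type*} [Fintype α] [Fintype W]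
    {H : SimpleGraph α} [DecidableRel H.Adj] (hH : H.IsTree) {ρ : α} (hρ : H.degree ρ = 1)
    {S : W → Set α} (hne : ∀ w, (S w).Nonempty) (hS : ∀ w, (H.induce (S w)).Preconnected)
    {G : SimpleGraph W} (hadj : ∀ u v : W, u ≠ v → (G.Adj u v ↔ (S u ∩ S v).Nonempty)) :
    IsKThin G ({v | H.degree v = 1}.ncard - 1) := by
  choose top htop hmin using fun w => (S w).exists_min_image (H.dist ρ) (S w).toFinite (hne w)
  choose leaf hleaf hleafρ hbelow using fun w => hH.exists_leaf_between hρ (top w)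
  let colors := ↥({v | H.degree v = 1} \ {ρ})
  have hcolors : Nat.card colors = {v | H.degree v = 1}.ncard - 1 := by
    rw [Nat.card_coe_set_eq, Set.ncard_sdiff_singleton_of_mem (s := {v | H.degree v = 1}) hρ]
  let e : colors ≃ Fin _ := Finite.equivFin colors
  refine isKThin_of_rank (fun w => H.dist ρ (top w))
    (fun w => (e ⟨leaf w, hleaf w, hleafρ w⟩).cast hcolors) ?_
  intro r s t hdts hdsr hst hc hrt
  obtain ⟨x, hxr, hxt⟩ := (hadj r t (G.ne_of_adj hrt)).1 hrt
  have hleaf_eq : leaf r = leaf s := congrArg Subtype.val (by simpa using hc)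
  have hsr : H.Between ρ (top s) (top r) :=
    hH.between_of_between_of_dist_le (hleaf_eq ▸ hbelow s) (hbelow r) hdsr
  have hrx := hH.between_of_forall_dist_le (hS r) (htop r) (hmin r) hxr
  have htx := hH.between_of_forall_dist_le (hS t) (htop t) (hmin t) hxt
  have hsx := hH.connected.between_trans hsr hrx
  have hts := hH.between_of_between_of_dist_le htx hsx hdts
  exact (hadj s t hst).2 ⟨top s, htop s, hH.mem_of_between (hS t) (htop t) hxt hts hsx⟩

/-- Let `G` be an `H`-graph for a tree `H` with exactly `ℓ` leaves. If `ℓ ≥ 2`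
then `G` has thinness at most `ℓ - 1`; if `ℓ ≤ 1` (so `H` is a single vertex)
then `G` is a complete graph and has thinness `1`. -/
theorem thinness_of_tree_H_graph {α W : Type*} [Fintype α] [Fintype W]
    (H : SimpleGraph α) [DecidableRel H.Adj] (hH : H.IsTree)
    (ℓ : ℕ) (hleaf : {v : α | H.degree v = 1}.ncard = ℓ)
    (H' : SimpleGraph α) (hsub : IsSubdivisionOf H H')
    (S : W → Set α) (hS : ∀ w, (S w).Nonempty ∧ ConnSub H' (S w))
    (G : SimpleGraph W)
    (hadj : ∀ u v : W, u ≠ v → (G.Adj u v ↔ (S u ∩ S v).Nonempty)) :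
    (2 ≤ ℓ → IsKThin G (ℓ - 1)) ∧
    (ℓ ≤ 1 → (∀ u v : W, u ≠ v → G.Adj u v) ∧ IsKThin G 1) := by
  obtain rfl : H = H' := (hsub.eq_of_connected hH.connected).symm
  have hconn : ∀ w, (H.induce (S w)).Preconnected := fun w => ((hS w).2 (hS w).1).preconnected
  rcases subsingleton_or_nontrivial α with hα | hα
  · have hℓ : ℓ = 0 := by
      rw [← hleaf, Set.ncard_eq_zero, Set.eq_empty_iff_forall_notMem]
      intro v (hv : H.degree v = 1)
      obtain ⟨u, hu⟩ := (H.degree_pos_iff_exists_adj v).1 (by omega)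
      exact hu.ne (Subsingleton.elim _ _)
    have hcomplete : ∀ u v : W, u ≠ v → G.Adj u v := by
      intro u v huv
      obtain ⟨a, ha⟩ := (hS u).1
      obtain ⟨b, hb⟩ := (hS v).1
      exact (hadj u v huv).2 ⟨a, ha, Subsingleton.elim b a ▸ hb⟩
    refine ⟨by omega, fun _ => ⟨hcomplete, ?_⟩⟩
    exact isKThin_of_rank (fun _ => 0) (fun _ => 0) fun _ s t _ _ hst _ _ => hcomplete s t hst
  · classical
    obtain ⟨ρ, ρ', hne, hρ, hρ'⟩ := hH.exists_ne_and_degree_eq_one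
    have hℓ : 2 ≤ ℓ := by
      rw [← hleaf, ← Set.ncard_pair hne]
      exact Set.ncard_le_ncard (Set.pair_subset hρ hρ')
    exact ⟨fun _ => hleaf ▸ hH.isKThin_of_subtrees hρ (fun w => (hS w).1) hconn hadj,
      by omega⟩
end

section
/- The 4-fan (the graph obtained from the path P_5 = v_1 v_2 v_3 v_4 v_5 by adding a universal vertex z adjacent to all v_i) is not the intersection graph of any non-crossing family of subtrees of any tree. More precisely: suppose for each vertex u of the 4-fan we have a subtree T_u of a tree T such that two vertices are adjacent iff their subtrees intersect, and the family is non-crossing; then a contradiction follows, using the fact (which may be assumed) that for the induced claw on {v_1, v_3, v_5, z}, there is a node x of T of degree at least 3 in T_z such that T_{v_1}, T_{v_3}, T_{v_5} each intersect T_z in a different branch of T with respect to x. -/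
/-- The 4-fan: path `v₁ v₂ v₃ v₄ v₅` (indices `0,…,4`) plus a universal vertex
`z` (index `5`). -/
def Fan : SimpleGraph (Fin 6) :=
  SimpleGraph.fromRel (fun a b => (b.val = a.val + 1 ∧ b.val ≤ 4) ∨ (a.val = 5 ∧ b.val ≠ 5))

lemma ConnSub.union {β : Type*} {G : SimpleGraph β} {S U : Set β}
    (hS : ConnSub G S) (hU : ConnSub G U) (h : (S ∩ U).Nonempty) :
    ConnSub G (S ∪ U) := fun _ =>
  SimpleGraph.induce_union_connected (hS (h.mono Set.inter_subset_left)).preconnected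
    (hU (h.mono Set.inter_subset_right)).preconnected h

/-- `B` is a branch of `G` at `x`: a maximal connected vertex set avoiding `x`, i.e. the vertex
set of a connected component of `G - x`. -/
def IsBranchAt {β : Type*} (G : SimpleGraph β) (x : β) (B : Set β) : Prop :=
  x ∉ B ∧ ConnSub G B ∧ ∀ B' : Set β, B ⊆ B' → x ∉ B' → ConnSub G B' → B' = B

namespace IsBranchAt

variable {β : Type*} {G : SimpleGraph β} {x : β} {B B' S : Set β}

lemma subset_of_inter_nonempty (hB : IsBranchAt G x B) (hS : ConnSub G S) (hxS : x ∉ S)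
    (hSB : (S ∩ B).Nonempty) : S ⊆ B := by
  obtain ⟨hxB, hBc, hmax⟩ := hB
  have hunion : S ∪ B = B :=
    hmax _ Set.subset_union_right (by rintro (h | h) <;> contradiction) (hS.union hBc hSB)
  exact hunion ▸ Set.subset_union_left

lemma eq_of_inter_nonempty (hB : IsBranchAt G x B) (hB' : IsBranchAt G x B')
    (h : (B ∩ B').Nonempty) : B = B' :=
  (hB'.subset_of_inter_nonempty hB.2.1 hB.1 h).antisymm
    (hB.subset_of_inter_nonempty hB'.2.1 hB'.1 (Set.inter_comm B B' ▸ h))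

lemma mem_of_inter_nonempty_of_ne (hB : IsBranchAt G x B) (hB' : IsBranchAt G x B')
    (hne : B ≠ B') (hS : ConnSub G S) (hSB : (S ∩ B).Nonempty) (hSB' : (S ∩ B').Nonempty) :
    x ∈ S := by
  by_contra hxS
  obtain ⟨a, haS, haB⟩ := hSB
  exact hne (hB.eq_of_inter_nonempty hB' ⟨a, haB, hB'.subset_of_inter_nonempty hS hxS hSB' haS⟩)

lemma subset_of_inter_subset {Z : Set β} (hB : IsBranchAt G x B) (hS : ConnSub G S)
    (hxZ : x ∈ Z) (hSZ : (S ∩ Z).Nonempty) (h : S ∩ Z ⊆ B) : S ⊆ B :=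
  hB.subset_of_inter_nonempty hS (fun hxS => hB.1 (h ⟨hxS, hxZ⟩))
    (hSZ.mono (Set.subset_inter Set.inter_subset_left h))

end IsBranchAt

theorem fan_not_noncrossing_subtree_graph_general {N : Type*}
    (T : SimpleGraph N)
    (F : Fin 6 → Set N)
    (hconn : ∀ v, ConnSub T (F v))
    (hadj : ∀ u v : Fin 6, u ≠ v → (Fan.Adj u v ↔ (F u ∩ F v).Nonempty))
    (x : N) (hx : x ∈ F 5)
    (B : Fin 3 → Set N)
    (hBcomp : ∀ i, x ∉ B i ∧ ConnSub T (B i) ∧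
      ∀ B' : Set N, B i ⊆ B' → x ∉ B' → ConnSub T B' → B' = B i)
    (hBdist : ∀ i j, i ≠ j → B i ≠ B j)
    (h1 : F 0 ∩ F 5 ⊆ B 0) (h2 : F 2 ∩ F 5 ⊆ B 1) (h3 : F 4 ∩ F 5 ⊆ B 2) :
    False := by
  have hB : ∀ i, IsBranchAt T x (B i) := hBcomp
  have meet : ∀ u v, Fan.Adj u v → (F u ∩ F v).Nonempty := fun u v huv =>
    (hadj u v huv.ne).1 huv
  have hF0 : F 0 ⊆ B 0 :=
    (hB 0).subset_of_inter_subset (hconn 0) hx (meet 0 5 (by simp [Fan])) h1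
  have hF2 : F 2 ⊆ B 1 :=
    (hB 1).subset_of_inter_subset (hconn 2) hx (meet 2 5 (by simp [Fan])) h2
  have hF4 : F 4 ⊆ B 2 :=
    (hB 2).subset_of_inter_subset (hconn 4) hx (meet 4 5 (by simp [Fan])) h3
  have hx1 : x ∈ F 1 := (hB 0).mem_of_inter_nonempty_of_ne (hB 1) (hBdist 0 1 (by decide))
    (hconn 1) ((meet 1 0 (by simp [Fan])).mono (Set.inter_subset_inter_right _ hF0))
    ((meet 1 2 (by simp [Fan])).mono (Set.inter_subset_inter_right _ hF2))
  have hx3 : x ∈ F 3 := (hB 1).mem_of_inter_nonempty_of_ne (hB 2) (hBdist 1 2 (by decide))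
    (hconn 3) ((meet 3 2 (by simp [Fan])).mono (Set.inter_subset_inter_right _ hF2))
    ((meet 3 4 (by simp [Fan])).mono (Set.inter_subset_inter_right _ hF4))
  have hnonadj : ¬ Fan.Adj 1 3 := by simp [Fan]
  exact hnonadj ((hadj 1 3 (by decide)).2 ⟨x, hx1, hx3⟩)

/-- The 4-fan is not the intersection graph of any non-crossing family of
subtrees of a tree: given such a representation, together with the (assumable)
fact that for the induced claw `{v₁, v₃, v₅, z}` there is a node `x ∈ T_z` and
three pairwise distinct connected components `B 0, B 1, B 2` of `T - x` such
that `T_{v₁} ∩ T_z ⊆ B 0`, `T_{v₃} ∩ T_z ⊆ B 1`, `T_{v₅} ∩ T_z ⊆ B 2`,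
a contradiction follows. -/
theorem fan_not_noncrossing_subtree_graph {N : Type*}
    (T : SimpleGraph N) (hT : T.IsTree)
    (F : Fin 6 → Set N)
    (hne : ∀ v, (F v).Nonempty) (hconn : ∀ v, ConnSub T (F v))
    (hadj : ∀ u v : Fin 6, u ≠ v → (Fan.Adj u v ↔ (F u ∩ F v).Nonempty))
    (hnc : ∀ u v : Fin 6, ConnSub T (F u \ F v))
    (x : N) (hx : x ∈ F 5)
    (B : Fin 3 → Set N)
    (hBcomp : ∀ i, x ∉ B i ∧ ConnSub T (B i) ∧
      ∀ B' : Set N, B i ⊆ B' → x ∉ B' → ConnSub T B' → B' = B i)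
    (hBdist : ∀ i j, i ≠ j → B i ≠ B j)
    (h1 : F 0 ∩ F 5 ⊆ B 0) (h2 : F 2 ∩ F 5 ⊆ B 1) (h3 : F 4 ∩ F 5 ⊆ B 2) :
    False :=
  fan_not_noncrossing_subtree_graph_general T F hconn hadj x hx B hBcomp hBdist h1 h2 h3
end

section
/- There is no graph H such that for every n ≥ 3 the star K_{1,n} admits a proper H-representation. Equivalently: for every fixed finite multigraph H there exists n such that K_{1,n} is not a proper H-graph. (A sufficient reason: in a proper representation no set contains another, so the center's representative and each leaf's representative must mutually overlap without containment; the leaf representatives are pairwise disjoint connected sets each meeting the boundary structure of the center's representative, and the number of such pairwise disjoint sets overlapping but not contained in a fixed connected subset of a subdivision of H is bounded by a function of H.) -/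
/-- A multigraph: a type of vertices `α`, a type of edges `ε`, and two endpoint
maps (parallel edges and self-loops are allowed). -/
structure Multigraph (α ε : Type*) where
  fst : ε → α
  snd : ε → α

/-- The internal (subdivision) vertices of an edge path: drop the two endpoints. -/
def internalOf {β : Type*} (l : List β) : List β := (l.drop 1).dropLast

/-- Witness that the simple graph `H'` is a subdivision of the multigraph `H`:
each edge `e` of `H` is replaced by a path `path e` in `H'` between the images of
its endpoints, the paths are internally disjoint from each other and from the
branch vertices, the edges of `H'` are exactly the consecutive pairs on the
paths, and every vertex of `H'` is a branch vertex or lies on a path. -/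
structure SubdivData {α ε β : Type*} (H : Multigraph α ε) (H' : SimpleGraph β) where
  φ : α → β
  inj : Function.Injective φ
  path : ε → List β
  head_eq : ∀ e, (path e).head? = some (φ (H.fst e))
  last_eq : ∀ e, (path e).getLast? = some (φ (H.snd e))
  chain : ∀ e, (path e).Chain' H'.Adj
  nodup_internal : ∀ e, (internalOf (path e)).Nodup
  internal_not_branch : ∀ e a, φ a ∉ internalOf (path e)
  internal_disj : ∀ e e', e ≠ e' → ∀ b ∈ internalOf (path e), b ∉ internalOf (path e')
  adj_iff : ∀ x y, H'.Adj x y ↔ ∃ e n,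
    ((path e)[n]? = some x ∧ (path e)[n + 1]? = some y) ∨
    ((path e)[n]? = some y ∧ (path e)[n + 1]? = some x)
  cover : ∀ b, (∃ a, φ a = b) ∨ ∃ e, b ∈ path e

/-- `G` is a proper `H`-graph: `G` is the intersection graph of a family of
nonempty connected vertex subsets of a subdivision `H'` of `H` in which no set
properly contains another. -/
def IsProperHGraph {α ε W : Type*} (H : Multigraph α ε) (G : SimpleGraph W) : Prop :=
  ∃ (N : ℕ) (H' : SimpleGraph (Fin N)) (_ : SubdivData H H') (S : W → Set (Fin N)),
    (∀ w, (S w).Nonempty ∧ ConnSub H' (S w)) ∧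
    (∀ u v : W, u ≠ v → (G.Adj u v ↔ (S u ∩ S v).Nonempty)) ∧
    (∀ u v : W, ¬ S u ⊂ S v)

/-- The star `K_{1,n}`: center `0` adjacent to the `n` leaves. -/
def starG (n : ℕ) : SimpleGraph (Fin (n + 1)) :=
  SimpleGraph.fromRel (fun u v => u = 0 ∧ v ≠ 0)

/-!
In a proper representation of `K_{1,n}` the leaf sets are pairwise disjoint, meet the centre
set `C` and are not contained in it, so each contains its own vertex of the outer boundary of `C`.
In a subdivision of `H` that boundary has at most `|V(H)| + 2|E(H)|` vertices. A boundary vertex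
that is not a branch vertex is interior to a single path, whose two neighbours on it are its only
neighbours. If two such vertices on one path had their neighbour in `C` on the same side, the
connected set `C`, which meets the stretch of path strictly between them, would be confined to
that stretch, yet the `C`-neighbour of one of the two lies outside it.
-/

namespace SimpleGraph

variable {β : Type*} (G : SimpleGraph β)

def outerBoundary (C : Set β) : Set β := {y | y ∉ C ∧ ∃ x ∈ C, G.Adj x y}

end SimpleGraph

section ConnSub

variable {β : Type*} {G : SimpleGraph β} {C T : Set β}

theorem ConnSub.forall_mem {P : β → Prop} (hC : ConnSub G C)
    (hP : ∀ x ∈ C, ∀ y ∈ C, G.Adj x y → P x → P y) {v : β} (hv : v ∈ C) (hPv : P v) :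
    ∀ c ∈ C, P c := by
  intro c hc
  by_contra hPc
  obtain ⟨p⟩ := (hC ⟨v, hv⟩).preconnected ⟨v, hv⟩ ⟨c, hc⟩
  obtain ⟨d, -, hd₁, hd₂⟩ := p.exists_boundary_dart {z | P z.val} hPv hPc
  exact hd₂ (hP _ d.fst.2 _ d.snd.2 d.adj hd₁)

theorem ConnSub.exists_mem_outerBoundary (hT : ConnSub G T) (hTC : (T ∩ C).Nonempty)
    (hTC' : ¬ T ⊆ C) : ∃ y ∈ T, y ∈ G.outerBoundary C := by
  by_contra! h
  obtain ⟨v, hvT, hvC⟩ := hTC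
  refine hTC' (hT.forall_mem (P := (· ∈ C)) ?_ hvT hvC)
  intro x _ y hyT hxy hxC
  by_contra hyC
  exact h y hyT ⟨hyC, x, hxC, hxy⟩

end ConnSub

theorem getElem?_internalOf {β : Type*} (l : List β) (j : ℕ) :
    (internalOf l)[j]? = if j + 2 < l.length then l[j + 1]? else none := by
  unfold internalOf
  rw [List.getElem?_dropLast, List.length_drop]
  split_ifs <;> first | omega | rfl | (rw [List.getElem?_drop]; congr 1; omega)

theorem mem_internalOf_iff {β : Type*} {l : List β} {v : β} :
    v ∈ internalOf l ↔ ∃ k, 1 ≤ k ∧ k + 1 < l.length ∧ l[k]? = some v := by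
  simp only [List.mem_iff_getElem?, getElem?_internalOf]
  constructor
  · rintro ⟨j, hj⟩
    split_ifs at hj with h
    exact ⟨j + 1, by omega, by omega, hj⟩
  · rintro ⟨k, hk₁, hk₂, hk⟩
    exact ⟨k - 1, by rw [if_pos (by omega), Nat.sub_add_cancel hk₁]; exact hk⟩

theorem getElem?_internalOf_sub_one {β : Type*} {l : List β} {k : ℕ} {v : β} (hk₁ : 1 ≤ k)
    (hk₂ : k + 1 < l.length) (hk : l[k]? = some v) : (internalOf l)[k - 1]? = some v := by
  rw [getElem?_internalOf, if_pos (by omega), Nat.sub_add_cancel hk₁, hk]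

namespace SubdivData

variable {α ε β : Type*} {H : Multigraph α ε} {H' : SimpleGraph β} (D : SubdivData H H')

def IsInternalAt (e : ε) (k : ℕ) (v : β) : Prop :=
  1 ≤ k ∧ k + 1 < (D.path e).length ∧ (D.path e)[k]? = some v

variable {D}

theorem exists_φ_eq_of_endpoint {e : ε} {m : ℕ} {v : β} (hm : (D.path e)[m]? = some v)
    (h : m = 0 ∨ m + 1 = (D.path e).length) : ∃ a, D.φ a = v := by
  rcases h with rfl | h
  · have h₀ := D.head_eq e
    rw [List.head?_eq_getElem?, hm, Option.some_inj] at h₀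
    exact ⟨H.fst e, h₀.symm⟩
  · have h₀ := D.last_eq e
    rw [List.getLast?_eq_getElem?, ← h, Nat.add_sub_cancel, hm, Option.some_inj] at h₀
    exact ⟨H.snd e, h₀.symm⟩

theorem exists_isInternalAt {v : β} (hv : ∀ a, D.φ a ≠ v) : ∃ e k, D.IsInternalAt e k v := by
  obtain ⟨e, hve⟩ := (D.cover v).resolve_left (by simpa using hv)
  obtain ⟨m, hm⟩ := List.mem_iff_getElem?.mp hve
  have hlt := (List.getElem?_eq_some_iff.mp hm).1
  have hm₀ : m ≠ 0 := fun h => by simpa [hv] using D.exists_φ_eq_of_endpoint hm (.inl h)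
  have hm₁ : m + 1 ≠ (D.path e).length := fun h => by
    simpa [hv] using D.exists_φ_eq_of_endpoint hm (.inr h)
  exact ⟨e, m, by omega, by omega, hm⟩

theorem IsInternalAt.unique {e : ε} {k : ℕ} {v : β} (h : D.IsInternalAt e k v) {e' : ε} {m : ℕ}
    (hm : (D.path e')[m]? = some v) : e' = e ∧ m = k := by
  obtain ⟨hk₁, hk₂, hk⟩ := h
  have hv : v ∈ internalOf (D.path e) := mem_internalOf_iff.mpr ⟨k, hk₁, hk₂, hk⟩
  have hlt := (List.getElem?_eq_some_iff.mp hm).1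
  have hm_int : 1 ≤ m ∧ m + 1 < (D.path e').length := by
    by_contra hend
    obtain ⟨a, rfl⟩ := D.exists_φ_eq_of_endpoint hm (by omega)
    exact D.internal_not_branch e a hv
  obtain rfl : e = e' := by
    by_contra hne
    exact D.internal_disj e' e (Ne.symm hne) v
      (mem_internalOf_iff.mpr ⟨m, hm_int.1, hm_int.2, hm⟩) hv
  have hk' := getElem?_internalOf_sub_one hk₁ hk₂ hk
  have hm' := getElem?_internalOf_sub_one hm_int.1 hm_int.2 hm
  have := (List.getElem?_inj (List.getElem?_eq_some_iff.mp hm').1 (D.nodup_internal e)).mp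
    (hm'.trans hk'.symm)
  exact ⟨rfl, by omega⟩

theorem IsInternalAt.adj {e : ε} {k : ℕ} {v : β} (h : D.IsInternalAt e k v) {u : β}
    (huv : H'.Adj v u) : (D.path e)[k - 1]? = some u ∨ (D.path e)[k + 1]? = some u := by
  obtain ⟨e', m, ⟨hv, hu⟩ | ⟨hu, hv⟩⟩ := (D.adj_iff v u).mp huv
  · obtain ⟨rfl, rfl⟩ := h.unique hv
    exact .inr hu
  · obtain ⟨rfl, rfl⟩ := h.unique hv
    exact .inl hu

variable {C : Set β}

theorem exists_index_mem_Ioo (hC : ConnSub H' C) {e : ε} {a j b : ℕ} {u v w : β}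
    (ha : (D.path e)[a]? = some u) (hu : u ∉ C) (hj : (D.path e)[j]? = some v) (hv : v ∈ C)
    (hb : (D.path e)[b]? = some w) (hw : w ∉ C) (haj : a < j) (hjb : j < b) :
    ∀ c ∈ C, ∃ m ∈ Set.Ioo a b, (D.path e)[m]? = some c := by
  have hb_lt := (List.getElem?_eq_some_iff.mp hb).1
  refine hC.forall_mem ?_ hv ⟨j, ⟨haj, hjb⟩, hj⟩
  rintro x - y hyC hxy ⟨m, ⟨ham, hmb⟩, hm⟩
  rcases IsInternalAt.adj ⟨by omega, by omega, hm⟩ hxy with hy | hy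
  · refine ⟨m - 1, ⟨?_, by omega⟩, hy⟩
    by_contra hle
    rw [show m - 1 = a by omega, ha, Option.some_inj] at hy
    exact hu (hy ▸ hyC)
  · refine ⟨m + 1, ⟨by omega, ?_⟩, hy⟩
    by_contra hle
    rw [show m + 1 = b by omega, hb, Option.some_inj] at hy
    exact hw (hy ▸ hyC)

theorem index_mem_Ioo (hC : ConnSub H' C) {e : ε} {a j b : ℕ} {u v w : β}
    (ha : (D.path e)[a]? = some u) (hu : u ∉ C) (hj : (D.path e)[j]? = some v) (hv : v ∈ C)
    (hb : (D.path e)[b]? = some w) (hw : w ∉ C) (haj : a < j) (hjb : j < b) {p : ℕ} {c : β}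
    (hp : (D.path e)[p]? = some c) (hc : c ∈ C) : p ∈ Set.Ioo a b := by
  have hb_lt := (List.getElem?_eq_some_iff.mp hb).1
  obtain ⟨m, ⟨ham, hmb⟩, hm⟩ := exists_index_mem_Ioo hC ha hu hj hv hb hw haj hjb c hc
  obtain ⟨-, rfl⟩ := IsInternalAt.unique (D := D) ⟨by omega, by omega, hm⟩ hp
  exact ⟨ham, hmb⟩

theorem not_lt_of_mem_sub_one (hC : ConnSub H' C) {e : ε} {k k' : ℕ} {x x' y y' : β}
    (hy : (D.path e)[k]? = some y) (hyC : y ∉ C) (hx : (D.path e)[k - 1]? = some x)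
    (hxC : x ∈ C) (hy' : (D.path e)[k']? = some y') (hy'C : y' ∉ C)
    (hx' : (D.path e)[k' - 1]? = some x') (hx'C : x' ∈ C) : ¬ k < k' := by
  intro hlt
  have hk : k < k' - 1 := by
    by_contra hle
    rw [show k' - 1 = k by omega, hy, Option.some_inj] at hx'
    exact hyC (hx' ▸ hx'C)
  have := index_mem_Ioo hC hy hyC hx' hx'C hy' hy'C hk (by omega) hx hxC
  exact absurd this.1 (by omega)

theorem not_lt_of_mem_add_one (hC : ConnSub H' C) {e : ε} {k k' : ℕ} {x x' y y' : β}
    (hy : (D.path e)[k]? = some y) (hyC : y ∉ C) (hx : (D.path e)[k + 1]? = some x)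
    (hxC : x ∈ C) (hy' : (D.path e)[k']? = some y') (hy'C : y' ∉ C)
    (hx' : (D.path e)[k' + 1]? = some x') (hx'C : x' ∈ C) : ¬ k < k' := by
  intro hlt
  have hk : k + 1 < k' := by
    by_contra hle
    rw [show k + 1 = k' by omega, hy', Option.some_inj] at hx
    exact hy'C (hx ▸ hxC)
  have := index_mem_Ioo hC hy hyC hx hxC hy' hy'C (by omega) hk hx' hx'C
  exact absurd this.2 (by omega)

variable (D C) in
def IsBoundaryLabel (y : β) : α ⊕ ε × Bool → Prop
  | .inl a => D.φ a = y
  | .inr (e, true) => ∃ k, ∃ x ∈ C, (D.path e)[k]? = some y ∧ (D.path e)[k - 1]? = some x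
  | .inr (e, false) => ∃ k, ∃ x ∈ C, (D.path e)[k]? = some y ∧ (D.path e)[k + 1]? = some x

theorem exists_isBoundaryLabel {y : β} (hy : y ∈ H'.outerBoundary C) :
    ∃ l, D.IsBoundaryLabel C y l := by
  obtain ⟨-, x, hxC, hxy⟩ := hy
  by_cases hb : ∃ a, D.φ a = y
  · obtain ⟨a, ha⟩ := hb
    exact ⟨.inl a, ha⟩
  · obtain ⟨e, k, hk⟩ := D.exists_isInternalAt (not_exists.mp hb)
    rcases hk.adj hxy.symm with hx | hx
    · exact ⟨.inr (e, true), k, x, hxC, hk.2.2, hx⟩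
    · exact ⟨.inr (e, false), k, x, hxC, hk.2.2, hx⟩

theorem IsBoundaryLabel.eq (hC : ConnSub H' C) {y y' : β} (hyC : y ∉ C) (hy'C : y' ∉ C)
    {l : α ⊕ ε × Bool} (h : D.IsBoundaryLabel C y l) (h' : D.IsBoundaryLabel C y' l) :
    y = y' := by
  rcases l with a | ⟨e, _ | _⟩
  · exact h.symm.trans h'
  · obtain ⟨k, x, hxC, hy, hx⟩ := h
    obtain ⟨k', x', hx'C, hy', hx'⟩ := h'
    obtain rfl : k = k' := le_antisymm
      (not_lt.mp (not_lt_of_mem_add_one hC hy' hy'C hx' hx'C hy hyC hx hxC))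
      (not_lt.mp (not_lt_of_mem_add_one hC hy hyC hx hxC hy' hy'C hx' hx'C))
    exact Option.some_inj.mp (hy.symm.trans hy')
  · obtain ⟨k, x, hxC, hy, hx⟩ := h
    obtain ⟨k', x', hx'C, hy', hx'⟩ := h'
    obtain rfl : k = k' := le_antisymm
      (not_lt.mp (not_lt_of_mem_sub_one hC hy' hy'C hx' hx'C hy hyC hx hxC))
      (not_lt.mp (not_lt_of_mem_sub_one hC hy hyC hx hxC hy' hy'C hx' hx'C))
    exact Option.some_inj.mp (hy.symm.trans hy')

theorem encard_outerBoundary_le [Fintype α] [Fintype ε] (D : SubdivData H H') (hC : ConnSub H' C) :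
    (H'.outerBoundary C).encard ≤ Fintype.card α + 2 * Fintype.card ε := by
  choose l hl using fun y : H'.outerBoundary C => exists_isBoundaryLabel (D := D) y.2
  have hl_inj : Function.Injective l := fun y y' h =>
    Subtype.ext ((hl y).eq hC y.2.1 y'.2.1 (h ▸ hl y'))
  calc (H'.outerBoundary C).encard = ENat.card (H'.outerBoundary C) := rfl
    _ ≤ ENat.card (α ⊕ ε × Bool) := ENat.card_le_card_of_injective hl_inj
    _ = Fintype.card α + 2 * Fintype.card ε := by
      simp only [ENat.card_eq_coe_fintype_card, Fintype.card_sum, Fintype.card_prod,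
        Fintype.card_bool]
      push_cast
      ring

end SubdivData

theorem starG_adj_zero_succ {n : ℕ} (i : Fin n) : (starG n).Adj 0 i.succ :=
  (SimpleGraph.fromRel_adj _ _ _).mpr ⟨(Fin.succ_ne_zero i).symm, .inl ⟨rfl, Fin.succ_ne_zero i⟩⟩

theorem not_starG_adj_succ_succ {n : ℕ} (i j : Fin n) : ¬ (starG n).Adj i.succ j.succ := by
  simp [starG, Fin.succ_ne_zero]

theorem IsProperHGraph.le_of_starG {α ε : Type*} [Fintype α] [Fintype ε] {H : Multigraph α ε}
    {n : ℕ} (h : IsProperHGraph H (starG n)) (hn : 2 ≤ n) :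
    n ≤ Fintype.card α + 2 * Fintype.card ε := by
  obtain ⟨N, H', D, S, hS, hadj, hproper⟩ := h
  have hmeet (i : Fin n) : (S i.succ ∩ S 0).Nonempty := by
    rw [Set.inter_comm]
    exact (hadj _ _ (Fin.succ_ne_zero i).symm).mp (starG_adj_zero_succ i)
  have hdisj : Pairwise fun i j : Fin n => Disjoint (S i.succ) (S j.succ) := fun i j hij =>
    Set.disjoint_iff_inter_eq_empty.mpr <| Set.not_nonempty_iff_eq_empty.mp fun hne =>
      not_starG_adj_succ_succ i j <| (hadj _ _ (Fin.succ_injective n |>.ne hij)).mpr hne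
  have hnot_sub (i : Fin n) : ¬ S i.succ ⊆ S 0 := by
    intro hsub
    obtain ⟨j, hji⟩ := Fintype.exists_ne_of_one_lt_card (by rw [Fintype.card_fin]; omega) i
    have hS_eq : S i.succ = S 0 := by
      by_contra hne
      exact hproper _ _ (hsub.ssubset_of_ne hne)
    obtain ⟨x, hxj, hx0⟩ := hmeet j
    exact Set.disjoint_left.mp (hdisj hji) hxj (hS_eq ▸ hx0)
  choose y hyS hy using fun i => (hS i.succ).2.exists_mem_outerBoundary (hmeet i) (hnot_sub i)
  have hy_inj : Function.Injective y := fun i j hij => by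
    by_contra hne
    exact Set.disjoint_left.mp (hdisj hne) (hyS i) (hij ▸ hyS j)
  have : (n : ℕ∞) ≤ Fintype.card α + 2 * Fintype.card ε :=
    calc (n : ℕ∞) = ENat.card (Fin n) := by simp
      _ ≤ (Set.range y).encard := hy_inj.encard_range
      _ ≤ (H'.outerBoundary (S 0)).encard := Set.encard_le_encard (Set.range_subset_iff.mpr hy)
      _ ≤ _ := D.encard_outerBoundary_le (hS 0).2
  exact_mod_cast this

/-- For every fixed finite multigraph `H` there exists `n ≥ 3` such that the star
`K_{1,n}` is not a proper `H`-graph. -/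
theorem exists_star_not_properHGraph {α ε : Type} [Fintype α] [Fintype ε]
    (H : Multigraph α ε) :
    ∃ n : ℕ, 3 ≤ n ∧ ¬ IsProperHGraph H (starG n) :=
  ⟨Fintype.card α + 2 * Fintype.card ε + 3, by omega, fun h => by
    have := h.le_of_starG (by omega)
    omega⟩
end

section
/- Consider the greedy algorithm for interval scheduling on a line: given a finite family of intervals [s_i, e_i], iteratively pick, among intervals disjoint from all previously picked ones, the one with smallest right endpoint (breaking ties by largest left endpoint). Then (a) the picked intervals are pairwise disjoint, and (b) every unpicked interval contains at least one endpoint (left or right) of some picked interval. -/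
/-- Two closed intervals (given by their endpoint pairs) are disjoint. -/
def IntDisj {α : Type*} [LinearOrder α] (I J : α × α) : Prop :=
  I.2 < J.1 ∨ J.2 < I.1

/-- One step of the greedy algorithm: among the intervals of `F` disjoint from
all previously picked intervals, pick one with smallest right endpoint, breaking
ties by largest left endpoint. -/
def GreedyStep {α : Type*} [LinearOrder α] (F : Finset (α × α))
    (P P' : Finset (α × α)) : Prop :=
  ∃ I ∈ F, (∀ J ∈ P, IntDisj I J) ∧
    (∀ K ∈ F, (∀ J ∈ P, IntDisj K J) →
      I.2 < K.2 ∨ (I.2 = K.2 ∧ K.1 ≤ I.1) ∨ I = K) ∧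
    P' = insert I P

/-- The greedy algorithm has finished: no interval of `F` is disjoint from all
picked intervals. -/
def GreedyDone {α : Type*} [LinearOrder α] (F P : Finset (α × α)) : Prop :=
  ∀ I ∈ F, ∃ J ∈ P, ¬ IntDisj I J

/-- Greedy interval scheduling: if `P` is obtained from `∅` by greedy steps and
no further step is possible, then (a) the picked intervals are pairwise
disjoint, and (b) every unpicked interval of the family contains an endpoint of
some picked interval. -/
theorem greedy_interval_scheduling {α : Type*} [LinearOrder α]
    (F P : Finset (α × α)) (hval : ∀ I ∈ F, I.1 ≤ I.2)
    (hrun : Relation.ReflTransGen (GreedyStep F) ∅ P)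
    (hdone : GreedyDone F P) :
    (∀ I ∈ P, ∀ J ∈ P, I ≠ J → IntDisj I J) ∧
    (∀ J ∈ F, J ∉ P → ∃ I ∈ P,
      (J.1 ≤ I.1 ∧ I.1 ≤ J.2) ∨ (J.1 ≤ I.2 ∧ I.2 ≤ J.2)) := by
  have key : (P ⊆ F) ∧ (∀ I ∈ P, ∀ J ∈ P, I ≠ J → IntDisj I J) ∧
      (∀ J ∈ F, J ∉ P → (∃ I ∈ P, ¬ IntDisj J I) → ∃ I ∈ P,
        (J.1 ≤ I.1 ∧ I.1 ≤ J.2) ∨ (J.1 ≤ I.2 ∧ I.2 ≤ J.2)) := by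
    clear hdone
    induction hrun with
    | refl => refine ⟨Finset.empty_subset _, ?_, ?_⟩ <;> simp
    | tail hab hstep ih =>
      rename_i b c
      obtain ⟨hsub, hpair, hend⟩ := ih
      obtain ⟨I, hIF, hdisj, hmin, heq⟩ := hstep
      subst heq
      refine ⟨Finset.insert_subset hIF hsub, ?_, ?_⟩
      · intro A hA B hB hne
        rcases Finset.mem_insert.1 hA with hA' | hA
        · rcases Finset.mem_insert.1 hB with hB' | hB
          · exact absurd (hA'.trans hB'.symm) hne
          · exact hA' ▸ hdisj B hB
        · rcases Finset.mem_insert.1 hB with hB' | hB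
          · rcases hB' ▸ hdisj A hA with h | h
            · exact Or.inr h
            · exact Or.inl h
          · exact hpair A hA B hB hne
      · intro J hJF hJP hmeet
        have hJP' : J ∉ b := fun h => hJP (Finset.mem_insert_of_mem h)
        by_cases hold : ∃ K ∈ b, ¬ IntDisj J K
        · obtain ⟨K, hK, hor⟩ := hend J hJF hJP' hold
          exact ⟨K, Finset.mem_insert_of_mem hK, hor⟩
        · push_neg at hold
          -- J is disjoint from all of b, and must meet I
          obtain ⟨K, hK, hKmeet⟩ := hmeet
          rcases Finset.mem_insert.1 hK with hK' | hK
          swap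
          · exact absurd (hold K hK) hKmeet
          subst hK'
          have hJdisj : ∀ K ∈ b, IntDisj J K := hold
          have hcase := hmin J hJF hJdisj
          have hIJ : K ≠ J := fun h => hJP (h ▸ Finset.mem_insert_self K b)
          -- meeting: ¬ IntDisj J I, i.e. ¬(J.2 < K.1 ∨ K.2 < J.1)
          have hmeet' : K.1 ≤ J.2 ∧ J.1 ≤ K.2 := by
            unfold IntDisj at hKmeet
            push_neg at hKmeet
            exact hKmeet
          refine ⟨K, Finset.mem_insert_self K b, ?_⟩
          rcases hcase with h | ⟨h1, h2⟩ | h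
          · exact Or.inr ⟨hmeet'.2, le_of_lt h⟩
          · exact Or.inl ⟨h2, (hval K hIF).trans (le_of_eq h1)⟩
          · exact absurd h hIJ
  refine ⟨key.2.1, fun J hJF hJP => ?_⟩
  obtain ⟨K, hK, hKm⟩ := hdone J hJF
  exact key.2.2 J hJF hJP ⟨K, hK, hKm⟩
end
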